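/- Let a finite group G act by k-algebra automorphisms on a k-algebra R. Then the map P ↦ (P:G) = ⋂_{g∈G} g·P from G-orbits of prime ideals of R to G-prime ideals of R is a bijection. -/

import Mathlib

/-- A two-sided ideal `P` of a ring `R` is prime if `P ≠ R` and `AB ⊆ P` implies
`A ⊆ P` or `B ⊆ P`. -/
def IsPrimeTwoSided {R : Type*} [Ring R] (P : TwoSidedIdeal R) : Prop :=
  P ≠ ⊤ ∧ ∀ A B : TwoSidedIdeal R, (∀ a ∈ A, ∀ b ∈ B, a * b ∈ P) → A ≤ P ∨ B ≤ P

/-- An ideal is `G`-stable if it is preserved by the action of every `g ∈ G`. -/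
def IsGStable (G : Type*) {R : Type*} [Group G] [Ring R] [MulSemiringAction G R]
    (I : TwoSidedIdeal R) : Prop :=
  ∀ g : G, ∀ x ∈ I, g • x ∈ I

/-- A proper `G`-stable ideal `I` is `G`-prime if `AB ⊆ I` for `G`-stable ideals
`A`, `B` implies `A ⊆ I` or `B ⊆ I`. -/
def IsGPrime (G : Type*) {R : Type*} [Group G] [Ring R] [MulSemiringAction G R]
    (I : TwoSidedIdeal R) : Prop :=
  I ≠ ⊤ ∧ IsGStable G I ∧
    ∀ A B : TwoSidedIdeal R, IsGStable G A → IsGStable G B →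
      (∀ a ∈ A, ∀ b ∈ B, a * b ∈ I) → A ≤ I ∨ B ≤ I

/-!
The core `(P : G) = ⋂_g g • P` of a prime `P` is `G`-prime, because a `G`-stable ideal lies
in `P` iff it lies in `(P : G)`. Conversely, for a `G`-prime `I`, Zorn's lemma gives an ideal `P`
maximal among those containing `I` whose core lies in `I` (chains are handled by the finiteness
of `G`). If `AB ⊆ P` then `(A ⊔ P : G) (B ⊔ P : G) ⊆ (P : G) ⊆ I`, so
`G`-primeness of `I` and maximality of `P` give `A ⊆ P` or `B ⊆ P`; hence `P` is prime with
core `I`. Finally, if primes `P`, `P'` have the same core, then the finite intersection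
`⋂_g g • P` lies in `P'`, so `g • P ⊆ P'` for some `g`, and likewise `k • P' ⊆ P`. Then
`(k g) • P ⊆ P`, which for an element of finite order forces equality, so `P' = g • P`.
-/

open scoped Pointwise

theorem Set.smul_set_eq_of_smul_set_subset {G α : Type*} [Group G] [Finite G] [MulAction G α]
    {g : G} {s : Set α} (h : g • s ⊆ s) : g • s = s := by
  have hpow : ∀ n : ℕ, g ^ n • s ⊆ s := by
    intro n
    induction n with
    | zero => simp
    | succ n ih => rw [pow_succ, mul_smul]; exact (Set.smul_set_mono h).trans ih
  -- in a finite group `g⁻¹` is a power of `g`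
  obtain ⟨n, hn⟩ : g⁻¹ ∈ Submonoid.powers g :=
    mem_powers_iff_mem_zpowers.2 (inv_mem (Subgroup.mem_zpowers g))
  refine h.antisymm (Set.subset_smul_set_iff.2 ?_)
  exact hn ▸ hpow n

namespace TwoSidedIdeal

variable {R : Type*} [Ring R]

theorem mem_sSup_of_directedOn {c : Set (TwoSidedIdeal R)} (hne : c.Nonempty)
    (hc : DirectedOn (· ≤ ·) c) {x : R} : x ∈ sSup c ↔ ∃ J ∈ c, x ∈ J := by
  refine ⟨fun hx => ?_, fun ⟨J, hJ, hxJ⟩ => le_sSup hJ hxJ⟩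
  let U : TwoSidedIdeal R := mk' {x | ∃ J ∈ c, x ∈ J}
    (hne.imp fun J hJ => ⟨hJ, J.zero_mem⟩)
    (fun ⟨J₁, h₁, hx⟩ ⟨J₂, h₂, hy⟩ => by
      obtain ⟨J, hJ, h₁J, h₂J⟩ := hc J₁ h₁ J₂ h₂
      exact ⟨J, hJ, J.add_mem (h₁J hx) (h₂J hy)⟩)
    (fun ⟨J, hJ, hx⟩ => ⟨J, hJ, J.neg_mem hx⟩)
    (fun ⟨J, hJ, hy⟩ => ⟨J, hJ, J.mul_mem_left _ _ hy⟩)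
    (fun ⟨J, hJ, hx⟩ => ⟨J, hJ, J.mul_mem_right _ _ hx⟩)
  have hU : sSup c ≤ U := sSup_le fun J hJ y hy => by
    simp only [U, mem_mk', Set.mem_ofPred_eq]
    exact ⟨J, hJ, hy⟩
  simpa only [U, mem_mk', Set.mem_ofPred_eq] using hU hx

end TwoSidedIdeal

namespace IsPrimeTwoSided

variable {R : Type*} [Ring R] {P : TwoSidedIdeal R}

theorem le_or_le_of_inf_le (hP : IsPrimeTwoSided P) {A B : TwoSidedIdeal R} (h : A ⊓ B ≤ P) :
    A ≤ P ∨ B ≤ P :=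
  hP.2 A B fun a ha b hb =>
    h ((TwoSidedIdeal.mem_inf _).2 ⟨A.mul_mem_right a b ha, B.mul_mem_left a b hb⟩)

theorem exists_le_of_finset_inf_le (hP : IsPrimeTwoSided P) {ι : Type*} {J : ι → TwoSidedIdeal R}
    (s : Finset ι) (h : s.inf J ≤ P) : ∃ i ∈ s, J i ≤ P := by
  classical
  induction s using Finset.induction_on with
  | empty => exact absurd (top_le_iff.1 h) hP.1
  | insert i s _ ih =>
    rw [Finset.inf_insert] at h
    rcases hP.le_or_le_of_inf_le h with hi | hs
    · exact ⟨i, Finset.mem_insert_self i s, hi⟩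
    · obtain ⟨j, hj, hjP⟩ := ih hs
      exact ⟨j, Finset.mem_insert_of_mem hj, hjP⟩

theorem exists_le_of_iInf_le (hP : IsPrimeTwoSided P) {ι : Type*} [Finite ι]
    {J : ι → TwoSidedIdeal R} (h : ⨅ i, J i ≤ P) : ∃ i, J i ≤ P := by
  have := Fintype.ofFinite ι
  rw [← Finset.inf_univ_eq_iInf] at h
  obtain ⟨i, -, hi⟩ := hP.exists_le_of_finset_inf_le Finset.univ h
  exact ⟨i, hi⟩

end IsPrimeTwoSided

namespace TwoSidedIdeal

variable (G : Type*) {R : Type*} [Group G] [Ring R] [MulSemiringAction G R]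

/-- The ideal `(J : G) = ⋂_{g ∈ G} g • J`, the largest `G`-stable ideal contained in `J`. -/
def core (J : TwoSidedIdeal R) : TwoSidedIdeal R :=
  ⨅ g : G, J.comap (MulSemiringAction.toRingHom G R g)

variable {G}

theorem mem_core {J : TwoSidedIdeal R} {x : R} : x ∈ core G J ↔ ∀ g : G, g • x ∈ J := by
  simp [core, mem_iInf, mem_comap]

theorem core_le (J : TwoSidedIdeal R) : core G J ≤ J := fun _ hx => by
  simpa using mem_core.1 hx 1

theorem isGStable_core (J : TwoSidedIdeal R) : IsGStable G (core G J) := fun g x hx =>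
  mem_core.2 fun h => by simpa [mul_smul] using mem_core.1 hx (h * g)

theorem le_core_of_le {I J : TwoSidedIdeal R} (hI : IsGStable G I) (h : I ≤ J) :
    I ≤ core G J := fun x hx => mem_core.2 fun g => h (hI g x hx)

theorem core_top : core G (⊤ : TwoSidedIdeal R) = ⊤ :=
  top_le_iff.1 fun _ _ => mem_core.2 fun _ => mem_top _

theorem mul_mem_core {A B C : TwoSidedIdeal R} (h : ∀ a ∈ A, ∀ b ∈ B, a * b ∈ C) :
    ∀ a ∈ core G A, ∀ b ∈ core G B, a * b ∈ core G C := fun a ha b hb =>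
  mem_core.2 fun g => smul_mul' g a b ▸ h _ (mem_core.1 ha g) _ (mem_core.1 hb g)

theorem mul_mem_of_mem_sup {A B P : TwoSidedIdeal R} (h : ∀ a ∈ A, ∀ b ∈ B, a * b ∈ P) :
    ∀ a ∈ A ⊔ P, ∀ b ∈ B ⊔ P, a * b ∈ P := by
  intro a ha b hb
  obtain ⟨a', ha', p, hp, rfl⟩ := mem_sup.1 ha
  obtain ⟨b', hb', q, hq, rfl⟩ := mem_sup.1 hb
  rw [add_mul, mul_add, mul_add]
  exact P.add_mem (P.add_mem (h _ ha' _ hb') (P.mul_mem_left _ _ hq))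
    (P.add_mem (P.mul_mem_right _ _ hp) (P.mul_mem_right _ _ hp))

theorem _root_.IsPrimeTwoSided.isGPrime_core {P : TwoSidedIdeal R} (hP : IsPrimeTwoSided P) :
    IsGPrime G (core G P) := by
  refine ⟨fun h => hP.1 (top_le_iff.1 (h ▸ core_le P)), isGStable_core P, fun A B hA hB hAB => ?_⟩
  exact (hP.2 A B fun a ha b hb => core_le P (hAB a ha b hb)).imp
    (le_core_of_le hA) (le_core_of_le hB)

theorem isPrimeTwoSided_of_maximal {I P : TwoSidedIdeal R} (hI : IsGPrime G I)
    (hP : Maximal (fun J => I ≤ J ∧ core G J ≤ I) P) : IsPrimeTwoSided P := by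
  have hmax : ∀ A : TwoSidedIdeal R, core G (A ⊔ P) ≤ I → A ≤ P := fun A hA =>
    le_sup_left.trans (hP.2 ⟨hP.1.1.trans le_sup_right, hA⟩ le_sup_right)
  refine ⟨fun hP_top => hI.1 (top_le_iff.1 ?_), fun A B hAB => ?_⟩
  · simpa [hP_top, core_top] using hP.1.2
  · have hcore : ∀ a ∈ core G (A ⊔ P), ∀ b ∈ core G (B ⊔ P), a * b ∈ I := fun a ha b hb =>
      hP.1.2 (mul_mem_core (mul_mem_of_mem_sup hAB) a ha b hb)
    exact (hI.2.2 _ _ (isGStable_core _) (isGStable_core _) hcore).imp (hmax A) (hmax B)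

variable [Finite G]

theorem core_sSup_le {c : Set (TwoSidedIdeal R)} (hne : c.Nonempty) (hc : DirectedOn (· ≤ ·) c)
    {I : TwoSidedIdeal R} (h : ∀ J ∈ c, core G J ≤ I) : core G (sSup c) ≤ I := by
  classical
  have := Fintype.ofFinite G
  intro x hx
  have hunion :
      ((Finset.univ.image (fun g : G => g • x) : Finset R) : Set R) ⊆ ⋃ J ∈ c, (J : Set R) := by
    simp only [Finset.coe_image, Finset.coe_univ, Set.image_univ, Set.range_subset_iff]
    intro g
    simpa using (mem_sSup_of_directedOn hne hc).1 (mem_core.1 hx g)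
  obtain ⟨J, hJ, hxJ⟩ := hc.exists_mem_subset_of_finset_subset_biUnion hne hunion
  exact h J hJ (mem_core.2 fun g => hxJ (by simp))

theorem _root_.IsGPrime.exists_isPrimeTwoSided_core_eq {I : TwoSidedIdeal R} (hI : IsGPrime G I) :
    ∃ P : TwoSidedIdeal R, IsPrimeTwoSided P ∧ core G P = I := by
  obtain ⟨P, -, hP⟩ := zorn_le_nonempty₀ {J | I ≤ J ∧ core G J ≤ I}
    (fun c hcS hc J hJ => ⟨sSup c,
      ⟨(hcS hJ).1.trans (le_sSup hJ), core_sSup_le ⟨J, hJ⟩ hc.directedOn fun K hK => (hcS hK).2⟩,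
      fun _ => le_sSup⟩)
    I ⟨le_rfl, core_le I⟩
  exact ⟨P, isPrimeTwoSided_of_maximal hI hP, le_antisymm hP.1.2 (le_core_of_le hI.2.1 hP.1.1)⟩

theorem exists_smul_subset_of_core_le {P P' : TwoSidedIdeal R} (hP' : IsPrimeTwoSided P')
    (h : core G P ≤ P') : ∃ g : G, g • (P : Set R) ⊆ P' := by
  obtain ⟨g, hg⟩ := hP'.exists_le_of_iInf_le h
  refine ⟨g⁻¹, fun x hx => hg ((mem_comap _).2 ?_)⟩
  simpa [Set.mem_smul_set_iff_inv_smul_mem] using hx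

theorem exists_smul_eq_of_core_eq {P P' : TwoSidedIdeal R} (hP : IsPrimeTwoSided P)
    (hP' : IsPrimeTwoSided P') (h : core G P = core G P') :
    ∃ g : G, g • (P : Set R) = P' := by
  obtain ⟨g, hg⟩ := exists_smul_subset_of_core_le hP' (h ▸ core_le P')
  obtain ⟨k, hk⟩ := exists_smul_subset_of_core_le hP (h ▸ core_le P)
  have hkg : (k * g) • (P : Set R) = P :=
    Set.smul_set_eq_of_smul_set_subset ((mul_smul k g _).trans_subset
      ((Set.smul_set_mono hg).trans hk))
  refine ⟨g, hg.antisymm ?_⟩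
  calc (P' : Set R) ⊆ k⁻¹ • (P : Set R) := Set.subset_smul_set_iff.2 (by simpa using hk)
    _ = k⁻¹ • (k * g) • (P : Set R) := by rw [hkg]
    _ = g • (P : Set R) := by rw [smul_smul, inv_mul_cancel_left]

end TwoSidedIdeal

open TwoSidedIdeal in
theorem finite_group_orbit_prime_bijection_general
    {G R : Type*} [Group G] [Finite G] [Ring R]
    [MulSemiringAction G R] :
    (∀ P Q : TwoSidedIdeal R, IsPrimeTwoSided P →
        (∀ x : R, x ∈ Q ↔ ∀ g : G, g • x ∈ P) → IsGPrime G Q) ∧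
    (∀ I : TwoSidedIdeal R, IsGPrime G I →
        ∃ P : TwoSidedIdeal R, IsPrimeTwoSided P ∧
          ∀ x : R, x ∈ I ↔ ∀ g : G, g • x ∈ P) ∧
    (∀ P P' : TwoSidedIdeal R, IsPrimeTwoSided P → IsPrimeTwoSided P' →
        ((∀ x : R, (∀ g : G, g • x ∈ P) ↔ ∀ g : G, g • x ∈ P')) →
        ∃ g : G, ∀ x : R, x ∈ P' ↔ g • x ∈ P) := by
  refine ⟨fun P Q hP hQ => ?_, fun I hI => ?_, fun P P' hP hP' hcore => ?_⟩
  · obtain rfl : Q = core G P := ext fun x => (hQ x).trans mem_core.symm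
    exact hP.isGPrime_core
  · obtain ⟨P, hP, rfl⟩ := hI.exists_isPrimeTwoSided_core_eq
    exact ⟨P, hP, fun x => mem_core⟩
  · obtain ⟨g, hg⟩ := exists_smul_eq_of_core_eq hP hP'
      (ext fun x => mem_core.trans ((hcore x).trans mem_core.symm))
    exact ⟨g⁻¹, fun x => by
      rw [← SetLike.mem_coe, ← hg, Set.mem_smul_set_iff_inv_smul_mem, SetLike.mem_coe]⟩

/-- Let a finite group `G` act by `k`-algebra automorphisms on a `k`-algebra `R`.
Then `P ↦ (P:G) = ⋂_{g∈G} g·P` gives a bijection from `G`-orbits of prime ideals of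
`R` onto `G`-prime ideals of `R`: the core of a prime is `G`-prime, every `G`-prime
is the core of some prime, and two primes have the same core exactly when they lie in
the same `G`-orbit. -/
theorem finite_group_orbit_prime_bijection
    {k G R : Type*} [Field k] [Group G] [Finite G] [Ring R] [Algebra k R]
    [MulSemiringAction G R] [SMulCommClass G k R] :
    (∀ P Q : TwoSidedIdeal R, IsPrimeTwoSided P →
        (∀ x : R, x ∈ Q ↔ ∀ g : G, g • x ∈ P) → IsGPrime G Q) ∧
    (∀ I : TwoSidedIdeal R, IsGPrime G I →
        ∃ P : TwoSidedIdeal R, IsPrimeTwoSided P ∧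
          ∀ x : R, x ∈ I ↔ ∀ g : G, g • x ∈ P) ∧
    (∀ P P' : TwoSidedIdeal R, IsPrimeTwoSided P → IsPrimeTwoSided P' →
        ((∀ x : R, (∀ g : G, g • x ∈ P) ↔ ∀ g : G, g • x ∈ P')) →
        ∃ g : G, ∀ x : R, x ∈ P' ↔ g • x ∈ P) :=
  finite_group_orbit_prime_bijection_general
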